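/- arXiv:2604.23967 — 4 statements merged into one kernel-verified Lean document; each statement's English description precedes it below -/
import Mathlib

section
/- An algebra A over a finite signature Σ is almost free (i.e., isomorphic to F_Γ for some finite set Γ of ground term equations) if and only if A is free over some finite partial Σ-algebra B. -/
namespace AFA

open Classical

/-- A functional signature: operation symbols with arities. Constants are arity-0 symbols. -/
structure Sig where
  Op : Type
  arity : Op → ℕ

/-- Ground terms over a signature. -/
inductive Tm (S : Sig) : Type
  | node (f : S.Op) (args : Fin (S.arity f) → Tm S) : Tm S

/-- The ground term given by a constant symbol. -/
def constTm (S : Sig) (c : S.Op) (h : S.arity c = 0) : Tm S :=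
  Tm.node c (fun i => absurd i.isLt (by omega))

/-- Height of a ground term (constants have height 0). -/
def Tm.height {S : Sig} : Tm S → ℕ
  | Tm.node _ a => Finset.univ.sup fun i => (a i).height + 1

/-- The i-th immediate subterm (child of the root of the syntax tree), if it exists. -/
def Tm.child {S : Sig} : Tm S → ℕ → Option (Tm S)
  | Tm.node f a, i => if h : i < S.arity f then some (a ⟨i, h⟩) else none

/-- A total algebra over the signature `S`. -/
structure Alg (S : Sig) where
  carrier : Type
  op : (f : S.Op) → (Fin (S.arity f) → carrier) → carrier

/-- Homomorphism of total algebras. -/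
structure Hom {S : Sig} (A B : Alg S) where
  toFun : A.carrier → B.carrier
  map : ∀ (f : S.Op) (a : Fin (S.arity f) → A.carrier),
    toFun (A.op f a) = B.op f (fun i => toFun (a i))

/-- Evaluation of a ground term in an algebra. -/
def Tm.eval {S : Sig} (A : Alg S) : Tm S → A.carrier
  | Tm.node f a => A.op f (fun i => (a i).eval A)

/-- An algebra is generated by the constants iff every element is the value of a ground term. -/
def GeneratedAlg {S : Sig} (A : Alg S) : Prop :=
  ∀ x : A.carrier, ∃ t : Tm S, t.eval A = x

/-- Isomorphism of total algebras. -/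
def AlgIso {S : Sig} (A B : Alg S) : Prop :=
  ∃ h : Hom A B, Function.Bijective h.toFun

/-- Derivability in equational logic from a set `Γ` of ground equations:
the smallest congruence containing `Γ`. `Thm Γ p q` means `Γ ⊢ p = q`. -/
inductive Thm {S : Sig} (Γ : Set (Tm S × Tm S)) : Tm S → Tm S → Prop
  | ax {p q : Tm S} : (p, q) ∈ Γ → Thm Γ p q
  | refl (t : Tm S) : Thm Γ t t
  | symm {p q : Tm S} : Thm Γ p q → Thm Γ q p
  | trans {p q r : Tm S} : Thm Γ p q → Thm Γ q r → Thm Γ p r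
  | congr {f : S.Op} {a b : Fin (S.arity f) → Tm S} :
      (∀ i, Thm Γ (a i) (b i)) → Thm Γ (Tm.node f a) (Tm.node f b)

/-- The setoid `∼_Γ` on ground terms. -/
def thmSetoid {S : Sig} (Γ : Set (Tm S × Tm S)) : Setoid (Tm S) :=
  ⟨Thm Γ, ⟨fun t => Thm.refl t, fun h => Thm.symm h, fun h₁ h₂ => Thm.trans h₁ h₂⟩⟩

/-- The quotient algebra `F_Γ = F/∼_Γ`. -/
noncomputable def FGamma {S : Sig} (Γ : Set (Tm S × Tm S)) : Alg S where
  carrier := Quotient (thmSetoid Γ)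
  op f a := Quotient.mk (thmSetoid Γ) (Tm.node f (fun i => (a i).out))

/-- Single-step ground rewriting: replace a subterm which is one side of an
equation of `Γ` by the other side. -/
inductive Step {S : Sig} (Γ : Set (Tm S × Tm S)) : Tm S → Tm S → Prop
  | here {p q : Tm S} : (p, q) ∈ Γ ∨ (q, p) ∈ Γ → Step Γ p q
  | sub {f : S.Op} {a b : Fin (S.arity f) → Tm S} (i : Fin (S.arity f)) :
      Step Γ (a i) (b i) → (∀ j, j ≠ i → a j = b j) → Step Γ (Tm.node f a) (Tm.node f b)

/-- Subterm relation on ground terms. -/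
inductive Subterm {S : Sig} : Tm S → Tm S → Prop
  | refl (t : Tm S) : Subterm t t
  | step {s : Tm S} {f : S.Op} {a : Fin (S.arity f) → Tm S} (i : Fin (S.arity f)) :
      Subterm s (a i) → Subterm s (Tm.node f a)

/-- `p` occurs in `Γ` (is one side of an equation of `Γ`). -/
def SideOf {S : Sig} (Γ : Set (Tm S × Tm S)) (p : Tm S) : Prop :=
  ∃ e ∈ Γ, p = e.1 ∨ p = e.2

/-- `ST Γ`: all subterms of terms occurring in `Γ`. -/
def ST {S : Sig} (Γ : Set (Tm S × Tm S)) : Set (Tm S) :=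
  {t | ∃ e ∈ Γ, Subterm t e.1 ∨ Subterm t e.2}

/-- A term "has a type" if it is `∼_Γ`-equivalent to a term mentioned in `Γ`. -/
def HasType {S : Sig} (Γ : Set (Tm S × Tm S)) (t : Tm S) : Prop :=
  ∃ p, SideOf Γ p ∧ Thm Γ t p

/-- `w` is an immediate subterm of `u`. -/
def ImmSub {S : Sig} (w u : Tm S) : Prop :=
  ∃ (f : S.Op) (a : Fin (S.arity f) → Tm S) (i : Fin (S.arity f)), u = Tm.node f a ∧ a i = w

/-- Edge relation of the quotient graph `R̂_Γ`: there is a directed edge from the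
class of `u` to the class of `w` iff some `Γ`-subterm-occurrence `u'` equivalent to `u`
has an immediate subterm `w'` equivalent to `w`. -/
def EdgeHat {S : Sig} (Γ : Set (Tm S × Tm S)) (u w : Tm S) : Prop :=
  ∃ u' w', u' ∈ ST Γ ∧ w' ∈ ST Γ ∧ Thm Γ u u' ∧ Thm Γ w w' ∧ ImmSub w' u'

/-- A directed cycle of `R̂_Γ` is reachable from (the class of) `t` by a directed path. -/
def CyclicFrom {S : Sig} (Γ : Set (Tm S × Tm S)) (t : Tm S) : Prop :=
  ∃ u, Relation.ReflTransGen (EdgeHat Γ) t u ∧ Relation.TransGen (EdgeHat Γ) u u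

/-- `t` is of cyclic type: `t` is `∼_Γ`-equivalent to a term mentioned in `Γ`
whose type is cyclic. -/
def OfCyclicType {S : Sig} (Γ : Set (Tm S × Tm S)) (t : Tm S) : Prop :=
  ∃ p, SideOf Γ p ∧ Thm Γ t p ∧ CyclicFrom Γ p

/-- The canonical representative map: given a choice function `r` assigning to each
typed term the fixed representative of its type, replace each maximal typed subterm
of `t` by the chosen representative. -/
noncomputable def repMap {S : Sig} (Γ : Set (Tm S × Tm S)) (r : Tm S → Tm S) : Tm S → Tm S
  | Tm.node f a =>
      if HasType Γ (Tm.node f a) then r (Tm.node f a)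
      else Tm.node f fun i => repMap Γ r (a i)

/-- A partial algebra over `S`. -/
structure PAlg (S : Sig) where
  carrier : Type
  pop : (f : S.Op) → (Fin (S.arity f) → carrier) → Option carrier

/-- An embedding exhibiting the partial algebra `B` as a substructure of the
total algebra `A`. -/
structure PEmb {S : Sig} (B : PAlg S) (A : Alg S) where
  toFun : B.carrier → A.carrier
  inj : Function.Injective toFun
  map : ∀ (f : S.Op) (b : Fin (S.arity f) → B.carrier) (c : B.carrier),
    B.pop f b = some c → A.op f (fun i => toFun (b i)) = toFun c

/-- `A` is free over the partial algebra `B` (via the substructure embedding `e`):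
every (constant-generated) algebra containing `B` as a substructure is a homomorphic
image of `A` via a homomorphism fixing `B` pointwise. -/
def IsFreeOver {S : Sig} (A : Alg S) (B : PAlg S) (e : PEmb B A) : Prop :=
  ∀ (C : Alg S), GeneratedAlg C → ∀ e' : PEmb B C,
    ∃ h : Hom A C, Function.Surjective h.toFun ∧ ∀ b, h.toFun (e.toFun b) = e'.toFun b

/-- Elements of a partial algebra generated from constants via the defined operations. -/
inductive PGen {S : Sig} (B : PAlg S) : B.carrier → Prop
  | op {f : S.Op} {b : Fin (S.arity f) → B.carrier} {c : B.carrier} :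
      (∀ i, PGen B (b i)) → B.pop f b = some c → PGen B c

/-- A partial algebra is generated by the constants. -/
def PGenerated {S : Sig} (B : PAlg S) : Prop := ∀ x, PGen B x

/-- Raw `B`-terms: terms built over elements of the partial algebra `B`. -/
inductive BTm {S : Sig} (B : PAlg S) : Type
  | base (b : B.carrier) : BTm B
  | app (f : S.Op) (args : Fin (S.arity f) → BTm B) : BTm B

/-- Normal `B`-terms: an application node is allowed only when it cannot be
evaluated in `B`. -/
inductive Normal {S : Sig} {B : PAlg S} : BTm B → Prop
  | base (b : B.carrier) : Normal (BTm.base b)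
  | app {f : S.Op} {args : Fin (S.arity f) → BTm B} :
      (∀ i, Normal (args i)) →
      ¬(∃ (b : Fin (S.arity f) → B.carrier) (c : B.carrier),
          (∀ i, args i = BTm.base (b i)) ∧ B.pop f b = some c) →
      Normal (BTm.app f args)

/-- The free total extension `F(B)` of the partial algebra `B`: its elements are
the normal `B`-terms; an operation evaluates in `B` whenever possible, and forms
a formal term otherwise. -/
noncomputable def FB {S : Sig} (B : PAlg S) : Alg S where
  carrier := {t : BTm B // Normal t}
  op f args :=
    if h : ∃ (b : Fin (S.arity f) → B.carrier) (c : B.carrier),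
        (∀ i, (args i).1 = BTm.base (b i)) ∧ B.pop f b = some c
    then ⟨BTm.base h.choose_spec.choose, Normal.base _⟩
    else ⟨BTm.app f (fun i => (args i).1), Normal.app (fun i => (args i).2) h⟩

/-- The canonical inclusion of `B` into `F(B)`. -/
def embB {S : Sig} (B : PAlg S) (b : B.carrier) : (FB B).carrier :=
  ⟨BTm.base b, Normal.base b⟩

/-- Terms with variables. -/
inductive TmV (S : Sig) : Type
  | var (n : ℕ) : TmV S
  | node (f : S.Op) (args : Fin (S.arity f) → TmV S) : TmV S

/-- Ground substitution into a term with variables. -/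
def TmV.substG {S : Sig} (ρ : ℕ → Tm S) : TmV S → Tm S
  | TmV.var n => ρ n
  | TmV.node f a => Tm.node f (fun i => (a i).substG ρ)

/-- Evaluation of a term with variables under an assignment. -/
def TmV.evalV {S : Sig} (A : Alg S) (ρ : ℕ → A.carrier) : TmV S → A.carrier
  | TmV.var n => ρ n
  | TmV.node f a => A.op f (fun i => (a i).evalV A ρ)

/-- All ground instances of a set of (possibly non-ground) equations. -/
def GroundInstances {S : Sig} (Γ : Set (TmV S × TmV S)) : Set (Tm S × Tm S) :=
  {pq | ∃ e ∈ Γ, ∃ ρ : ℕ → Tm S, pq.1 = e.1.substG ρ ∧ pq.2 = e.2.substG ρ}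

/-- `A ⊨ Γ` for a set of (possibly non-ground) equations. -/
def SatV {S : Sig} (A : Alg S) (Γ : Set (TmV S × TmV S)) : Prop :=
  ∀ e ∈ Γ, ∀ ρ : ℕ → A.carrier, TmV.evalV A ρ e.1 = TmV.evalV A ρ e.2

/-- The finite partial algebra of `∼_Γ`-classes containing a term of height `≤ N`. -/
noncomputable def heightPAlg {S : Sig} (Γ : Set (Tm S × Tm S)) (N : ℕ) : PAlg S where
  carrier := {x : Quotient (thmSetoid Γ) //
    ∃ t : Tm S, t.height ≤ N ∧ Quotient.mk (thmSetoid Γ) t = x}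
  pop f b :=
    if h : ∃ t : Tm S, t.height ≤ N ∧
        Quotient.mk (thmSetoid Γ) t =
          Quotient.mk (thmSetoid Γ) (Tm.node f (fun i => (b i).1.out))
    then some ⟨Quotient.mk (thmSetoid Γ) (Tm.node f (fun i => (b i).1.out)), h⟩
    else none

/-- The set `B = C ∪ ST(Γ₁ ∪ Γ₂)`. -/
def BSet {S : Sig} (Γ₁ Γ₂ : Set (Tm S × Tm S)) : Set (Tm S) :=
  {t | (∃ (c : S.Op) (h : S.arity c = 0), t = constTm S c h) ∨ t ∈ ST (Γ₁ ∪ Γ₂)}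

/-- The partial algebra induced by `Γ` on the `∼_Γ`-classes of terms of `Bs`:
`f` applied to classes is defined iff the class of the resulting term again
contains a term of `Bs`. -/
noncomputable def BAlg {S : Sig} (Γ : Set (Tm S × Tm S)) (Bs : Set (Tm S)) : PAlg S where
  carrier := Quotient (Setoid.comap (Subtype.val : Bs → Tm S) (thmSetoid Γ))
  pop f b :=
    if h : ∃ u : Bs, Thm Γ u.1 (Tm.node f (fun i => ((b i).out).1))
    then some (Quotient.mk (Setoid.comap (Subtype.val : Bs → Tm S) (thmSetoid Γ)) h.choose)
    else none

/-- The class of `t ∈ Bs` as an element of `BAlg Γ Bs`. -/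
noncomputable def BAlgMk {S : Sig} (Γ : Set (Tm S × Tm S)) (Bs : Set (Tm S))
    (t : Tm S) (ht : t ∈ Bs) : (BAlg Γ Bs).carrier :=
  Quotient.mk (Setoid.comap (Subtype.val : Bs → Tm S) (thmSetoid Γ)) ⟨t, ht⟩

/-- Isomorphism of partial algebras: a bijection preserving definedness and
values of the partial operations in both directions. -/
def PIso {S : Sig} (B₁ B₂ : PAlg S) : Prop :=
  ∃ e : B₁.carrier ≃ B₂.carrier,
    ∀ (f : S.Op) (b : Fin (S.arity f) → B₁.carrier),
      Option.map e (B₁.pop f b) = B₂.pop f (fun i => e (b i))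

/-- The algebra structure on `∼_Γ`-classes of `ST(Γ)`, defined via the closure
hypothesis `hf`. -/
noncomputable def STAlg {S : Sig} (Γ : Set (Tm S × Tm S))
    (hf : ∀ (f : S.Op) (a : Fin (S.arity f) → Tm S), (∀ i, a i ∈ ST Γ) →
      ∃ u ∈ ST Γ, Thm Γ (Tm.node f a) u) : Alg S where
  carrier := Quotient (Setoid.comap (Subtype.val : ST Γ → Tm S) (thmSetoid Γ))
  op f a :=
    let h := hf f (fun i => ((a i).out).1) (fun i => ((a i).out).2)
    Quotient.mk (Setoid.comap (Subtype.val : ST Γ → Tm S) (thmSetoid Γ))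
      ⟨h.choose, h.choose_spec.1⟩

/-- The map `φ : F → ST(Γ)` defined inductively by choosing, at each application,
a `∼_Γ`-equivalent member of `ST(Γ)`. -/
noncomputable def phiST {S : Sig} (Γ : Set (Tm S × Tm S))
    (hf : ∀ (f : S.Op) (a : Fin (S.arity f) → Tm S), (∀ i, a i ∈ ST Γ) →
      ∃ u ∈ ST Γ, Thm Γ (Tm.node f a) u) : Tm S → {u : Tm S // u ∈ ST Γ}
  | Tm.node f a =>
      let ih := fun i => phiST Γ hf (a i)
      let h := hf f (fun i => (ih i).1) (fun i => (ih i).2)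
      ⟨h.choose, h.choose_spec.1⟩

/-- The tester predicate `Is_f` on `F(B)`: holds of `a` iff `a ∉ B` and `a` is a
formal term with head symbol `f`. -/
def IsTester {S : Sig} {B : PAlg S} (f : S.Op) (a : (FB B).carrier) : Prop :=
  ∃ args : Fin (S.arity f) → BTm B, a.1 = BTm.app f args

/-!
An almost free algebra `F_Γ` is free over the partial algebra of `∼_Γ`-classes of the subterms
of `Γ`: every algebra `C` containing that partial algebra evaluates each subterm of `Γ` to its
image, hence satisfies `Γ`, so evaluation descends to a surjection `F_Γ → C`.

Conversely, if `A` is free over a finite generated partial algebra `B`, name every element of `B`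
by a term and let `Γ` be the resulting (finite) operation table of `B`. Then `B` embeds into `F_Γ`,
freeness yields a surjection `A → F_Γ`, and evaluation `F_Γ → A` is a left inverse of it because
`A` is generated by its constants.
-/

section Algebra

variable {S : Sig}

def Hom.comp {A B C : Alg S} (g : Hom B C) (h : Hom A B) : Hom A C where
  toFun x := g.toFun (h.toFun x)
  map f a := by rw [h.map, g.map]

noncomputable def Hom.symm {A B : Alg S} (h : Hom A B) (hh : Function.Bijective h.toFun) :
    Hom B A where
  toFun := (Equiv.ofBijective _ hh).symm
  map f a := (Equiv.ofBijective _ hh).injective <| by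
    simp only [Equiv.ofBijective_apply, Equiv.ofBijective_apply_symm_apply, h.map]

theorem Hom.map_eval {A C : Alg S} (h : Hom A C) (t : Tm S) : h.toFun (t.eval A) = t.eval C := by
  induction t with
  | node f a ih => simp only [Tm.eval, h.map, ih]

theorem Hom.surjective_of_generated {A C : Alg S} (hC : GeneratedAlg C) (h : Hom A C) :
    Function.Surjective h.toFun := fun x => by
  obtain ⟨t, rfl⟩ := hC x
  exact ⟨t.eval A, h.map_eval t⟩

theorem Hom.leftInverse_of_generated {A B : Alg S} (hA : GeneratedAlg A) (h : Hom A B)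
    (g : Hom B A) : Function.LeftInverse g.toFun h.toFun := fun x => by
  obtain ⟨t, rfl⟩ := hA x
  rw [h.map_eval, g.map_eval]

def PEmb.comp {B : PAlg S} {A C : Alg S} (g : Hom A C) (hg : Function.Injective g.toFun)
    (e : PEmb B A) : PEmb B C where
  toFun b := g.toFun (e.toFun b)
  inj := hg.comp e.inj
  map f b c hbc := by rw [← g.map, e.map f b c hbc]

theorem PGen.exists_eval_eq {A : Alg S} {B : PAlg S} (e : PEmb B A) {b : B.carrier}
    (hb : PGen B b) : ∃ t : Tm S, t.eval A = e.toFun b := by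
  induction hb with
  | @op f b c _ hbc ih =>
    choose t ht using ih
    exact ⟨Tm.node f t, by simp only [Tm.eval, ht, e.map f b c hbc]⟩

theorem IsFreeOver.exists_of_algIso {A A' : Alg S} {B : PAlg S} {e : PEmb B A'}
    (hiso : AlgIso A A') (hfree : IsFreeOver A' B e) : ∃ e' : PEmb B A, IsFreeOver A B e' := by
  obtain ⟨h, hh⟩ := hiso
  let g := h.symm hh
  have hhg : ∀ y, h.toFun (g.toFun y) = y := (Equiv.ofBijective _ hh).apply_symm_apply
  refine ⟨e.comp g (Equiv.ofBijective _ hh).symm.injective, fun C hC e'' => ?_⟩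
  obtain ⟨k, hk, hke⟩ := hfree C hC e''
  exact ⟨k.comp h, hk.comp hh.surjective, fun b => (congrArg k.toFun (hhg _)).trans (hke b)⟩

end Algebra

section FGamma

variable {S : Sig} {Γ : Set (Tm S × Tm S)}

def Satisfies (A : Alg S) (Γ : Set (Tm S × Tm S)) : Prop :=
  ∀ p q, (p, q) ∈ Γ → p.eval A = q.eval A

theorem Thm.eval_eq {A : Alg S} (hA : Satisfies A Γ) {p q : Tm S}
    (h : Thm Γ p q) : p.eval A = q.eval A := by
  induction h with
  | ax h => exact hA _ _ h
  | refl => rfl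
  | symm _ ih => exact ih.symm
  | trans _ _ ih₁ ih₂ => exact ih₁.trans ih₂
  | congr _ ih => simp only [Tm.eval, ih]

theorem thm_out_mk (t : Tm S) : Thm Γ (Quotient.mk (thmSetoid Γ) t).out t :=
  Quotient.exact (Quotient.out_eq (Quotient.mk (thmSetoid Γ) t))

theorem eval_FGamma (t : Tm S) : t.eval (FGamma Γ) = Quotient.mk (thmSetoid Γ) t := by
  induction t with
  | node f a ih =>
    exact Quotient.sound (Thm.congr fun i => Quotient.exact ((Quotient.out_eq _).trans (ih i)))

theorem generatedAlg_FGamma : GeneratedAlg (FGamma Γ) := fun x =>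
  ⟨x.out, (eval_FGamma _).trans (Quotient.out_eq x)⟩

noncomputable def FGamma.lift (A : Alg S) (hA : Satisfies A Γ) :
    Hom (FGamma Γ) A where
  toFun := Quotient.lift (Tm.eval A) fun _ _ => Thm.eval_eq hA
  map f x := by
    conv_rhs => rw [← funext fun i => Quotient.out_eq (x i)]
    rfl

end FGamma

section Forward

variable {S : Sig} {Γ : Set (Tm S × Tm S)} {Bs : Set (Tm S)}

def SubtermClosed (Bs : Set (Tm S)) : Prop :=
  ∀ ⦃f : S.Op⦄ ⦃a : Fin (S.arity f) → Tm S⦄, Tm.node f a ∈ Bs → ∀ i, a i ∈ Bs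

theorem Subterm.trans {s t u : Tm S} (hst : Subterm s t) (htu : Subterm t u) : Subterm s u := by
  induction htu with
  | refl => exact hst
  | step i _ ih => exact Subterm.step i ih

theorem subtermClosed_ST (Γ : Set (Tm S × Tm S)) : SubtermClosed (ST Γ) := by
  rintro f a ⟨e, he, hsub⟩ i
  have hi : Subterm (a i) (Tm.node f a) := Subterm.step i (Subterm.refl _)
  exact ⟨e, he, hsub.imp hi.trans hi.trans⟩

theorem mem_ST_of_mem {p q : Tm S} (h : (p, q) ∈ Γ) : p ∈ ST Γ ∧ q ∈ ST Γ :=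
  ⟨⟨_, h, Or.inl (Subterm.refl p)⟩, ⟨_, h, Or.inr (Subterm.refl q)⟩⟩

theorem subterm_finite (t : Tm S) : {s : Tm S | Subterm s t}.Finite := by
  induction t with
  | node f a ih =>
    refine ((Set.finite_iUnion ih).insert (Tm.node f a)).subset fun s hs => ?_
    cases hs with
    | refl => exact Set.mem_insert _ _
    | step i h => exact Or.inr (Set.mem_iUnion.mpr ⟨i, h⟩)

theorem ST_finite (hΓ : Γ.Finite) : (ST Γ).Finite :=
  (hΓ.biUnion fun e _ => (subterm_finite e.1).union (subterm_finite e.2)).subset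
    fun _ ⟨_, he, ht⟩ => Set.mem_biUnion he ht

theorem thm_out_BAlgMk (u : Tm S) (hu : u ∈ Bs) : Thm Γ (BAlgMk Γ Bs u hu).out.1 u :=
  Quotient.exact (Quotient.out_eq (BAlgMk Γ Bs u hu))

theorem BAlg.pop_mk {f : S.Op} {a : Fin (S.arity f) → Tm S} (ha : ∀ i, a i ∈ Bs) {u : Tm S}
    (hu : u ∈ Bs) (h : Thm Γ u (Tm.node f a)) :
    (BAlg Γ Bs).pop f (fun i => BAlgMk Γ Bs (a i) (ha i)) = some (BAlgMk Γ Bs u hu) := by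
  have hout i := thm_out_BAlgMk (Γ := Γ) (a i) (ha i)
  have hdef : ∃ v : Bs, Thm Γ v.1 (Tm.node f fun i => (BAlgMk Γ Bs (a i) (ha i)).out.1) :=
    ⟨⟨u, hu⟩, h.trans (Thm.congr fun i => (hout i).symm)⟩
  refine (dif_pos hdef).trans (congrArg some (Quotient.sound ?_))
  exact hdef.choose_spec.trans ((Thm.congr hout).trans h.symm)

theorem BAlg.thm_of_pop_eq_some {f : S.Op} {b : Fin (S.arity f) → (BAlg Γ Bs).carrier}
    {c : (BAlg Γ Bs).carrier} (h : (BAlg Γ Bs).pop f b = some c) :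
    Thm Γ c.out.1 (Tm.node f fun i => (b i).out.1) := by
  by_cases hdef : ∃ v : Bs, Thm Γ v.1 (Tm.node f fun i => (b i).out.1)
  · obtain rfl := Option.some_injective _ ((dif_pos hdef).symm.trans h)
    exact (thm_out_BAlgMk _ hdef.choose.2).trans hdef.choose_spec
  · exact absurd ((dif_neg hdef).symm.trans h) (Option.some_ne_none c).symm

theorem BAlg.pGenerated (hBs : SubtermClosed Bs) : PGenerated (BAlg Γ Bs) := by
  suffices ∀ u (hu : u ∈ Bs), PGen (BAlg Γ Bs) (BAlgMk Γ Bs u hu) from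
    Quotient.ind fun u => this u.1 u.2
  intro u
  induction u with
  | node f a ih =>
    intro hu
    exact PGen.op (fun i => ih i _) (BAlg.pop_mk (hBs hu) hu (Thm.refl _))

theorem BAlg.finite (hBs : Bs.Finite) : Finite (BAlg Γ Bs).carrier :=
  have := hBs.to_subtype
  Quotient.finite _

noncomputable def BAlg.toFGamma (Γ : Set (Tm S × Tm S)) (Bs : Set (Tm S)) :
    PEmb (BAlg Γ Bs) (FGamma Γ) where
  toFun x := Quotient.mk (thmSetoid Γ) x.out.1
  inj x y h := Quotient.out_equiv_out.mp (show Thm Γ x.out.1 y.out.1 from Quotient.exact h)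
  map _ _ _ h := Quotient.sound <|
    (Thm.congr fun _ => thm_out_mk _).trans (BAlg.thm_of_pop_eq_some h).symm

theorem BAlg.toFGamma_mk (u : Tm S) (hu : u ∈ Bs) :
    (BAlg.toFGamma Γ Bs).toFun (BAlgMk Γ Bs u hu) = Quotient.mk (thmSetoid Γ) u :=
  Quotient.sound (thm_out_BAlgMk u hu)

theorem PEmb.eval_eq_of_mem {C : Alg S} (e : PEmb (BAlg Γ Bs) C) (hBs : SubtermClosed Bs)
    {u : Tm S} (hu : u ∈ Bs) : u.eval C = e.toFun (BAlgMk Γ Bs u hu) := by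
  induction u with
  | node f a ih =>
    rw [← e.map f _ _ (BAlg.pop_mk (hBs hu) hu (Thm.refl _))]
    simp only [Tm.eval, ← ih]

theorem isFreeOver_FGamma (hBs : SubtermClosed Bs) (hΓ : ∀ p q, (p, q) ∈ Γ → p ∈ Bs ∧ q ∈ Bs) :
    IsFreeOver (FGamma Γ) (BAlg Γ Bs) (BAlg.toFGamma Γ Bs) := by
  intro C hC e
  have hsat : Satisfies C Γ := fun p q h => by
    obtain ⟨hp, hq⟩ := hΓ p q h
    rw [e.eval_eq_of_mem hBs hp, e.eval_eq_of_mem hBs hq]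
    exact congrArg e.toFun (Quotient.sound (Thm.ax h))
  refine ⟨FGamma.lift C hsat, (FGamma.lift C hsat).surjective_of_generated hC, ?_⟩
  refine Quotient.ind fun u => ?_
  exact (congrArg _ (BAlg.toFGamma_mk u.1 u.2)).trans (e.eval_eq_of_mem hBs u.2)

end Forward

section Backward

variable {S : Sig} {B : PAlg S}

/-- The operation table of `B`, with each element `b` named by the term `t b`. -/
def diagram (B : PAlg S) (t : B.carrier → Tm S) : Set (Tm S × Tm S) :=
  {pq | ∃ (f : S.Op) (b : Fin (S.arity f) → B.carrier) (c : B.carrier),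
    B.pop f b = some c ∧ pq = (Tm.node f fun i => t (b i), t c)}

theorem diagram_finite [Finite S.Op] [Finite B.carrier] (t : B.carrier → Tm S) :
    (diagram B t).Finite :=
  (Set.finite_range fun x : Σ f : S.Op, (Fin (S.arity f) → B.carrier) × B.carrier =>
    ((Tm.node x.1 fun i => t (x.2.1 i)), t x.2.2)).subset
    fun _ ⟨f, b, c, _, hpq⟩ => ⟨⟨f, b, c⟩, hpq.symm⟩

theorem satisfies_diagram {A : Alg S} (e : PEmb B A) {t : B.carrier → Tm S}
    (ht : ∀ b, (t b).eval A = e.toFun b) :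
    Satisfies A (diagram B t) := by
  rintro p q ⟨f, b, c, hbc, hpq⟩
  obtain ⟨rfl, rfl⟩ := Prod.ext_iff.mp hpq
  simp only [Tm.eval, ht, e.map f b c hbc]

noncomputable def diagram.emb {A : Alg S} (e : PEmb B A) {t : B.carrier → Tm S}
    (ht : ∀ b, (t b).eval A = e.toFun b) : PEmb B (FGamma (diagram B t)) where
  toFun b := Quotient.mk _ (t b)
  inj b b' h := e.inj <| by
    rw [← ht, ← ht]
    exact (Quotient.exact h).eval_eq (satisfies_diagram e ht)
  map f b c hbc := Quotient.sound <|
    (Thm.congr fun i => thm_out_mk (t (b i))).trans (Thm.ax ⟨f, b, c, hbc, rfl⟩)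

theorem IsFreeOver.exists_algIso_FGamma [Finite S.Op] [Finite B.carrier] {A : Alg S}
    (hA : GeneratedAlg A) {e : PEmb B A} (hB : PGenerated B) (hfree : IsFreeOver A B e) :
    ∃ Γ : Set (Tm S × Tm S), Γ.Finite ∧ AlgIso A (FGamma Γ) := by
  choose t ht using fun b => (hB b).exists_eval_eq e
  obtain ⟨h, hsurj, -⟩ := hfree _ generatedAlg_FGamma (diagram.emb e ht)
  have hinv := Hom.leftInverse_of_generated hA h (FGamma.lift A (satisfies_diagram e ht))
  exact ⟨diagram B t, diagram_finite t, h, hinv.injective, hsurj⟩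

end Backward

/-- A (constant-generated) algebra `A` is almost free (isomorphic to `F_Γ`
for some finite set `Γ` of ground term equations) iff it is free over some finite
partial algebra `B`. -/
theorem stmt5 (S : Sig) [Fintype S.Op] (A : Alg S) (hA : GeneratedAlg A) :
    (∃ Γ : Set (Tm S × Tm S), Γ.Finite ∧ AlgIso A (FGamma Γ)) ↔
    (∃ (B : PAlg S) (e : PEmb B A),
      Finite B.carrier ∧ PGenerated B ∧ IsFreeOver A B e) := by
  constructor
  · rintro ⟨Γ, hΓ, hiso⟩
    obtain ⟨e, hfree⟩ :=
      (isFreeOver_FGamma (subtermClosed_ST Γ) fun _ _ => mem_ST_of_mem).exists_of_algIso hiso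
    exact ⟨BAlg Γ (ST Γ), e, BAlg.finite (ST_finite hΓ),
      BAlg.pGenerated (subtermClosed_ST Γ), hfree⟩
  · rintro ⟨B, e, _, hgen, hfree⟩
    exact hfree.exists_algIso_FGamma hA hgen

end AFA
end

section
/- Fix a finite set Γ of ground term equations and for each ∼_Γ-congruence class choose a representative via the map rep defined by replacing, in a given term t, each maximal subterm equivalent to some term mentioned in Γ by a fixed chosen representative of its class. Then rep satisfies: (1) t ∼_Γ rep(t) for all ground terms t, and (2) for all ground terms s, t, s ∼_Γ t if and only if rep(s) and rep(t) are equal as terms. -/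
namespace AFA

open Classical

/-! Typedness is an invariant of `∼_Γ`-classes, so at every node either both sides of a
derivation are replaced by the same chosen representative, or neither is and `repMap`
commutes with the head symbol; hence `repMap` is constant on classes, and
`t ∼_Γ repMap t` turns this into a characterisation of `∼_Γ`. -/

section RepMap

variable {S : Sig} {Γ : Set (Tm S × Tm S)} {r : Tm S → Tm S}

theorem HasType.of_thm {s t : Tm S} (hs : HasType Γ s) (h : Thm Γ s t) : HasType Γ t :=
  let ⟨p, hp, hsp⟩ := hs
  ⟨p, hp, h.symm.trans hsp⟩

theorem hasType_of_mem {p q : Tm S} (h : (p, q) ∈ Γ) : HasType Γ p :=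
  ⟨p, ⟨(p, q), h, Or.inl rfl⟩, Thm.refl p⟩

theorem repMap_of_hasType {t : Tm S} (h : HasType Γ t) : repMap Γ r t = r t := by
  cases t
  rw [repMap, if_pos h]

theorem repMap_node_of_not_hasType {f : S.Op} {a : Fin (S.arity f) → Tm S}
    (h : ¬HasType Γ (Tm.node f a)) :
    repMap Γ r (Tm.node f a) = Tm.node f fun i => repMap Γ r (a i) := by
  rw [repMap, if_neg h]

theorem thm_repMap (hr : ∀ t, HasType Γ t → Thm Γ t (r t)) :
    ∀ t, Thm Γ t (repMap Γ r t)
  | Tm.node f a => by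
    by_cases h : HasType Γ (Tm.node f a)
    · rw [repMap_of_hasType h]
      exact hr _ h
    · rw [repMap_node_of_not_hasType h]
      exact Thm.congr fun i => thm_repMap hr (a i)

theorem repMap_eq_of_thm (hr : ∀ s t, HasType Γ s → Thm Γ s t → r s = r t)
    {s t : Tm S} (h : Thm Γ s t) : repMap Γ r s = repMap Γ r t := by
  have of_hasType : ∀ {s t : Tm S}, Thm Γ s t → HasType Γ s → repMap Γ r s = repMap Γ r t :=
    fun hst hs => by
      rw [repMap_of_hasType hs, repMap_of_hasType (hs.of_thm hst), hr _ _ hs hst]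
  induction h with
  | ax hpq => exact of_hasType (Thm.ax hpq) (hasType_of_mem hpq)
  | refl => rfl
  | symm _ ih => exact ih.symm
  | trans _ _ ih₁ ih₂ => exact ih₁.trans ih₂
  | @congr f a b hab ih =>
    by_cases ha : HasType Γ (Tm.node f a)
    · exact of_hasType (Thm.congr hab) ha
    · have hb : ¬HasType Γ (Tm.node f b) := fun hb => ha (hb.of_thm (Thm.congr hab).symm)
      rw [repMap_node_of_not_hasType ha, repMap_node_of_not_hasType hb]
      exact congrArg (Tm.node f) (funext ih)

theorem thm_of_repMap_eq (hr : ∀ t, HasType Γ t → Thm Γ t (r t)) {s t : Tm S}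
    (h : repMap Γ r s = repMap Γ r t) : Thm Γ s t :=
  (thm_repMap hr s).trans (h ▸ (thm_repMap hr t).symm)

end RepMap

theorem stmt7_general (S : Sig) (Γ : Set (Tm S × Tm S))
    (r : Tm S → Tm S)
    (hr1 : ∀ t, HasType Γ t → Thm Γ t (r t))
    (hr2 : ∀ s t, HasType Γ s → Thm Γ s t → r s = r t) :
    (∀ t, Thm Γ t (repMap Γ r t)) ∧
    (∀ s t, Thm Γ s t ↔ repMap Γ r s = repMap Γ r t) := by
  exact ⟨thm_repMap hr1, fun s t => ⟨repMap_eq_of_thm hr2, thm_of_repMap_eq hr1⟩⟩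

/-- Let `r` assign to each typed term the fixed chosen representative of
its type (so `r t ∼_Γ t`, and `r` is constant on `∼_Γ`-classes of typed terms). Then the
canonical representative map `rep` (replacing each maximal typed subterm by its chosen
representative) satisfies: (1) `t ∼_Γ rep t`; (2) `s ∼_Γ t ↔ rep s = rep t` as terms. -/
theorem stmt7 (S : Sig) [Fintype S.Op] (Γ : Set (Tm S × Tm S)) (hΓ : Γ.Finite)
    (r : Tm S → Tm S)
    (hr1 : ∀ t, HasType Γ t → Thm Γ t (r t))
    (hr2 : ∀ s t, HasType Γ s → Thm Γ s t → r s = r t) :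
    (∀ t, Thm Γ t (repMap Γ r t)) ∧
    (∀ s t, Thm Γ s t ↔ repMap Γ r s = repMap Γ r t) :=
  stmt7_general S Γ r hr1 hr2

end AFA
end

section
/- Let Γ be a finite set of ground term equations and let t be a ground term that has a subterm whose ∼_Γ-class contains a term mentioned in Γ whose type is cyclic. Then the ∼_Γ-congruence class of t is infinite. -/
namespace AFA

open Classical

/-!
An edge of `R̂_Γ` from the class of `x` to the class of `y` means that some member of the class
of `x` has a member of the class of `y` as an immediate subterm; putting an arbitrary member `w`
of the class of `y` in its place gives a member of the class of `x` strictly higher than `w`.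
Running around a cycle therefore produces members of arbitrarily large height in the class of a
node on it. These lift back along the path to the cyclic type, and then by congruence from the
subterm to `t`, without losing height; a class of unbounded height is infinite.
-/

lemma Tm.height_lt_height_node {S : Sig} (f : S.Op) (a : Fin (S.arity f) → Tm S)
    (i : Fin (S.arity f)) : (a i).height < (Tm.node f a).height :=
  Finset.le_sup (f := fun j => (a j).height + 1) (Finset.mem_univ i)

lemma Thm.exists_node_height_gt {S : Sig} {Γ : Set (Tm S × Tm S)} {f : S.Op}
    {a : Fin (S.arity f) → Tm S} {i : Fin (S.arity f)} {w : Tm S} (h : Thm Γ (a i) w) :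
    ∃ v, Thm Γ (Tm.node f a) v ∧ w.height < v.height := by
  refine ⟨Tm.node f (Function.update a i w), Thm.congr fun j => ?_, ?_⟩
  · rcases eq_or_ne j i with rfl | hj
    · simpa only [Function.update_self] using h
    · simpa only [Function.update_of_ne hj] using Thm.refl (a j)
  · simpa only [Function.update_self] using
      Tm.height_lt_height_node f (Function.update a i w) i

lemma EdgeHat.exists_thm_height_gt {S : Sig} {Γ : Set (Tm S × Tm S)} {x y w : Tm S}
    (hxy : EdgeHat Γ x y) (hyw : Thm Γ y w) : ∃ v, Thm Γ x v ∧ w.height < v.height := by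
  obtain ⟨-, -, -, -, hxu, hyw', f, a, i, rfl, rfl⟩ := hxy
  obtain ⟨v, hv, hlt⟩ := Thm.exists_node_height_gt (hyw'.symm.trans hyw)
  exact ⟨v, hxu.trans hv, hlt⟩

lemma exists_thm_height_gt_of_transGen {S : Sig} {Γ : Set (Tm S × Tm S)} {x y w : Tm S}
    (hxy : Relation.TransGen (EdgeHat Γ) x y) (hyw : Thm Γ y w) :
    ∃ v, Thm Γ x v ∧ w.height < v.height := by
  induction hxy using Relation.TransGen.head_induction_on with
  | single hxy => exact hxy.exists_thm_height_gt hyw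
  | head hxc _ ih =>
    obtain ⟨v, hv, hlt⟩ := ih
    obtain ⟨v', hv', hlt'⟩ := hxc.exists_thm_height_gt hv
    exact ⟨v', hv', hlt.trans hlt'⟩

lemma exists_thm_height_ge_of_reflTransGen {S : Sig} {Γ : Set (Tm S × Tm S)} {x y w : Tm S}
    (hxy : Relation.ReflTransGen (EdgeHat Γ) x y) (hyw : Thm Γ y w) :
    ∃ v, Thm Γ x v ∧ w.height ≤ v.height := by
  rcases Relation.reflTransGen_iff_eq_or_transGen.mp hxy with rfl | hxy
  · exact ⟨w, hyw, le_rfl⟩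
  · obtain ⟨v, hv, hlt⟩ := exists_thm_height_gt_of_transGen hxy hyw
    exact ⟨v, hv, hlt.le⟩

lemma exists_thm_height_ge_of_transGen_self {S : Sig} {Γ : Set (Tm S × Tm S)} {u : Tm S}
    (hu : Relation.TransGen (EdgeHat Γ) u u) (n : ℕ) :
    ∃ w, Thm Γ u w ∧ n ≤ w.height := by
  induction n with
  | zero => exact ⟨u, Thm.refl u, Nat.zero_le _⟩
  | succ n ih =>
    obtain ⟨w, hw, hle⟩ := ih
    obtain ⟨v, hv, hlt⟩ := exists_thm_height_gt_of_transGen hu hw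
    exact ⟨v, hv, hle.trans_lt hlt⟩

lemma Subterm.exists_thm_height_ge {S : Sig} {Γ : Set (Tm S × Tm S)} {s t w : Tm S}
    (hst : Subterm s t) (hsw : Thm Γ s w) : ∃ v, Thm Γ t v ∧ w.height ≤ v.height := by
  induction hst with
  | refl => exact ⟨w, hsw, le_rfl⟩
  | step _ _ ih =>
    obtain ⟨v, hv, hle⟩ := ih
    obtain ⟨v', hv', hlt⟩ := Thm.exists_node_height_gt hv
    exact ⟨v', hv', hle.trans hlt.le⟩

theorem stmt10_general (S : Sig) (Γ : Set (Tm S × Tm S))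
    (t : Tm S) (h : ∃ s, Subterm s t ∧ OfCyclicType Γ s) :
    {u | Thm Γ t u}.Infinite := by
  obtain ⟨s, hst, p, -, hsp, u, hpu, huu⟩ := h
  have unbounded : ∀ n, ∃ v, Thm Γ t v ∧ n < v.height := fun n => by
    obtain ⟨w, huw, hw⟩ := exists_thm_height_ge_of_transGen_self huu (n + 1)
    obtain ⟨w', hpw', hw'⟩ := exists_thm_height_ge_of_reflTransGen hpu huw
    obtain ⟨v, htv, hv⟩ := hst.exists_thm_height_ge (hsp.trans hpw')
    exact ⟨v, htv, by omega⟩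
  refine Set.Infinite.of_image Tm.height (Set.infinite_of_forall_exists_gt fun n => ?_)
  obtain ⟨v, htv, hv⟩ := unbounded n
  exact ⟨v.height, ⟨v, htv, rfl⟩, hv⟩

/-- If a ground term `t` has a subterm of cyclic type, then the
`∼_Γ`-congruence class of `t` is infinite. -/
theorem stmt10 (S : Sig) [Fintype S.Op] (Γ : Set (Tm S × Tm S)) (hΓ : Γ.Finite)
    (t : Tm S) (h : ∃ s, Subterm s t ∧ OfCyclicType Γ s) :
    {u | Thm Γ t u}.Infinite :=
  stmt10_general S Γ t h

end AFA
end

section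
/- Let Γ be a finite set of ground term equations with ST(Γ) closed under the operations up to ∼_Γ-equivalence (every constant is equivalent to a member of ST(Γ), and f applied to members of ST(Γ) is always equivalent to a member of ST(Γ)). Then the map φ defined inductively by φ(c) = some u ∈ ST(Γ) with c ∼_Γ u, and φ(f t₀…t_{k-1}) = some u ∈ ST(Γ) with f φ(t₀)…φ(t_{k-1}) ∼_Γ u, induces a well-defined isomorphism between F_Γ and the quotient of ST(Γ) by ∼_Γ with operations defined via these equivalences. -/
namespace AFA

open Classical

/-! Every term is `∼_Γ`-equivalent to its image `φ(t) ∈ ST(Γ)`, by induction on `t` using that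
`∼_Γ` is a congruence. Hence `φ(t) ∼_Γ φ(t')` iff `t ∼_Γ t'`, so `φ` descends to an injective map on
`F_Γ`; it fixes the class of every `u ∈ ST(Γ)`, so it is surjective; and it commutes with the
operations because both sides of the homomorphism equation are equivalent to the same term. -/

section

variable {S : Sig} {Γ : Set (Tm S × Tm S)}
  (hf : ∀ (f : S.Op) (a : Fin (S.arity f) → Tm S), (∀ i, a i ∈ ST Γ) →
    ∃ u ∈ ST Γ, Thm Γ (Tm.node f a) u)

theorem thm_phiST (t : Tm S) : Thm Γ t (phiST Γ hf t).1 := by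
  induction t with
  | node f a ih =>
    rw [phiST]
    exact Thm.trans (Thm.congr ih)
      (hf f (fun i => (phiST Γ hf (a i)).1) (fun i => (phiST Γ hf (a i)).2)).choose_spec.2

noncomputable def phiQuot :
    Quotient (thmSetoid Γ) → Quotient (Setoid.comap (Subtype.val : ST Γ → Tm S) (thmSetoid Γ)) :=
  Quotient.lift (fun t => Quotient.mk _ (phiST Γ hf t)) fun _ _ h =>
    Quotient.sound (Thm.trans (Thm.symm (thm_phiST hf _)) (Thm.trans h (thm_phiST hf _)))

theorem phiQuot_mk_eq_mk_iff (t : Tm S) (u : ST Γ) :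
    phiQuot hf (Quotient.mk _ t) = Quotient.mk _ u ↔ Thm Γ t u.1 :=
  ⟨fun h => Thm.trans (thm_phiST hf t) (Quotient.exact h),
    fun h => Quotient.sound (Thm.trans (Thm.symm (thm_phiST hf t)) h)⟩

theorem thm_out_phiQuot (x : Quotient (thmSetoid Γ)) : Thm Γ x.out (phiQuot hf x).out.1 := by
  rw [← phiQuot_mk_eq_mk_iff, Quotient.out_eq, Quotient.out_eq]

theorem phiQuot_op (f : S.Op) (a : Fin (S.arity f) → Quotient (thmSetoid Γ)) :
    phiQuot hf ((FGamma Γ).op f a) = (STAlg Γ hf).op f fun i => phiQuot hf (a i) :=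
  (phiQuot_mk_eq_mk_iff hf _ _).2 <| Thm.trans (Thm.congr fun i => thm_out_phiQuot hf (a i))
    (hf f _ fun i => (phiQuot hf (a i)).out.2).choose_spec.2

theorem phiQuot_injective : Function.Injective (phiQuot hf) := by
  rintro ⟨t⟩ ⟨t'⟩ h
  exact Quotient.sound (Thm.trans ((phiQuot_mk_eq_mk_iff hf t _).1 h) (Thm.symm (thm_phiST hf t')))

theorem phiQuot_surjective : Function.Surjective (phiQuot hf) := by
  rintro ⟨u⟩
  exact ⟨Quotient.mk _ u.1, (phiQuot_mk_eq_mk_iff hf _ _).2 (Thm.refl _)⟩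

end

theorem stmt12_general (S : Sig) (Γ : Set (Tm S × Tm S))
    (hf : ∀ (f : S.Op) (a : Fin (S.arity f) → Tm S), (∀ i, a i ∈ ST Γ) →
      ∃ u ∈ ST Γ, Thm Γ (Tm.node f a) u) :
    ∃ h : Hom (FGamma Γ) (STAlg Γ hf),
      Function.Bijective h.toFun ∧
      ∀ t : Tm S, h.toFun (Quotient.mk (thmSetoid Γ) t) =
        Quotient.mk (Setoid.comap (Subtype.val : ST Γ → Tm S) (thmSetoid Γ))
          (phiST Γ hf t) :=
  ⟨⟨phiQuot hf, phiQuot_op hf⟩, ⟨phiQuot_injective hf, phiQuot_surjective hf⟩, fun _ => rfl⟩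

/-- If `ST(Γ)` is closed under the operations up to `∼_Γ`-equivalence
(every constant is equivalent to a member of `ST(Γ)`, and every application of an
operation to members of `ST(Γ)` is equivalent to a member of `ST(Γ)`), then the
inductively defined map `φ` induces a well-defined isomorphism between `F_Γ` and
the quotient algebra of `ST(Γ)` by `∼_Γ`. -/
theorem stmt12 (S : Sig) [Fintype S.Op] (Γ : Set (Tm S × Tm S)) (hΓ : Γ.Finite)
    (hc : ∀ (c : S.Op) (h : S.arity c = 0), ∃ u ∈ ST Γ, Thm Γ (constTm S c h) u)
    (hf : ∀ (f : S.Op) (a : Fin (S.arity f) → Tm S), (∀ i, a i ∈ ST Γ) →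
      ∃ u ∈ ST Γ, Thm Γ (Tm.node f a) u) :
    ∃ h : Hom (FGamma Γ) (STAlg Γ hf),
      Function.Bijective h.toFun ∧
      ∀ t : Tm S, h.toFun (Quotient.mk (thmSetoid Γ) t) =
        Quotient.mk (Setoid.comap (Subtype.val : ST Γ → Tm S) (thmSetoid Γ))
          (phiST Γ hf t) :=
  stmt12_general S Γ hf

end AFA
end
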